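/- arXiv:math/0703309 — 6 statements merged into one kernel-verified Lean document; each statement's English description precedes it below -/
import Mathlib

section
/- Let k ≥ 2 be an integer, C ∈ (0,1], and let A ⊆ G be a finite connected set of degree k with constant C, meaning every subset B ⊆ A satisfies T_k(B) ≥ C^{2k}(|B|/|A|)^{2k} T_k(A). Assume the Rudin-type bound T_k(Λ) ≤ 288^k k^k |Λ|^k holds for all dissociated sets Λ ⊆ G. Then any maximal dissociated subset Λ of A satisfies |Λ| ≤ 288 C^{-2} k |A|^2 / T_k(A)^{1/k}, and every a ∈ A can be expressed as a = ∑_i ε_i λ_i with ε_i ∈ {-1,0,1}, λ_i ∈ Λ. -/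
/-!
A set obtained from a maximal dissociated `Λ ⊆ A` by adding some `a ∈ A \ Span Λ` would still be
dissociated: a vanishing `±1`-combination with nonzero coefficient at `a` would exhibit `a` as an
element of `Span Λ`. Hence `A ⊆ Span Λ`. For the size bound, connectedness applied to `B = Λ`
and the Rudin-type bound give `C^{2k} (|Λ|/|A|)^{2k} T_k(A) ≤ T_k(Λ) ≤ 288^k k^k |Λ|^k`, which
after cancelling `|Λ|^k` and taking `k`-th roots is the claimed inequality.
-/

open Finset

variable {G : Type*} [AddCommGroup G] [DecidableEq G]

/-- `Tk k A` : number of `2k`-tuples from `A` with equal `k`-fold sums. -/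
def Tk (k : ℕ) (A : Finset G) : ℕ :=
  (((Fintype.piFinset fun _ : Fin k => A) ×ˢ (Fintype.piFinset fun _ : Fin k => A)).filter
    fun t => ∑ i, t.1 i = ∑ i, t.2 i).card

/-- `Λ` is dissociated. -/
def IsDissociated (Λ : Finset G) : Prop :=
  ∀ ε : G → ℤ, (∀ x ∈ Λ, ε x = -1 ∨ ε x = 0 ∨ ε x = 1) →
    (∑ x ∈ Λ, ε x • x) = 0 → ∀ x ∈ Λ, ε x = 0

/-- `Span Λ = { ∑ εᵢ λᵢ : εᵢ ∈ {-1,0,1} }`. -/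
def SpanSet (Λ : Finset G) : Set G :=
  {y | ∃ ε : G → ℤ, (∀ x ∈ Λ, ε x = -1 ∨ ε x = 0 ∨ ε x = 1) ∧ y = ∑ x ∈ Λ, ε x • x}

lemma Tk_pos (k : ℕ) {A : Finset G} (hA : A.Nonempty) : 0 < Tk k A := by
  obtain ⟨a, ha⟩ := hA
  exact card_pos.mpr ⟨(fun _ => a, fun _ => a), by simp [Fintype.mem_piFinset, ha]⟩

lemma mem_spanSet_of_mem {Λ : Finset G} {a : G} (ha : a ∈ Λ) : a ∈ SpanSet Λ := by
  refine ⟨fun x => if x = a then 1 else 0, fun x _ => ?_, ?_⟩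
  · by_cases h : x = a <;> simp [h]
  · simp only [ite_smul, one_smul, zero_smul, sum_ite_eq', ha, if_true]

lemma IsDissociated.insert {Λ : Finset G} (hΛ : IsDissociated Λ) {a : G} (ha : a ∉ SpanSet Λ) :
    IsDissociated (insert a Λ) := by
  have haΛ : a ∉ Λ := fun h => ha (mem_spanSet_of_mem h)
  intro ε hε hsum
  rw [sum_insert haΛ] at hsum
  have hεΛ : ∀ y ∈ Λ, ε y = -1 ∨ ε y = 0 ∨ ε y = 1 := fun y hy => hε y (mem_insert_of_mem hy)
  have hsumΛ : ∑ y ∈ Λ, ε y • y ∈ SpanSet Λ := ⟨ε, hεΛ, rfl⟩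
  have hneg_sumΛ : -∑ y ∈ Λ, ε y • y ∈ SpanSet Λ := by
    refine ⟨fun y => -ε y, fun y hy => ?_, by simp only [neg_smul, sum_neg_distrib]⟩
    rcases hεΛ y hy with h | h | h <;> simp [h]
  have hεa : ε a = 0 := by
    rcases hε a (mem_insert_self a Λ) with h | h | h
    · rw [h, neg_one_smul, neg_add_eq_zero] at hsum
      exact absurd (hsum ▸ hsumΛ) ha
    · exact h
    · rw [h, one_smul, add_eq_zero_iff_eq_neg] at hsum
      exact absurd (hsum ▸ hneg_sumΛ) ha
  rw [hεa, zero_smul, zero_add] at hsum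
  intro x hx
  rcases mem_insert.mp hx with rfl | hx
  · exact hεa
  · exact hΛ ε hεΛ hsum x hx

lemma IsDissociated.mem_spanSet_of_maximal {A Λ : Finset G} (hΛA : Λ ⊆ A) (hΛ : IsDissociated Λ)
    (hmax : ∀ Λ' : Finset G, Λ' ⊆ A → IsDissociated Λ' → Λ ⊆ Λ' → Λ' = Λ) :
    ∀ a ∈ A, a ∈ SpanSet Λ := by
  intro a haA
  by_contra ha
  have hinsert := hmax _ (insert_subset haA hΛA) (hΛ.insert ha) (subset_insert a Λ)
  exact ha (mem_spanSet_of_mem (hinsert ▸ mem_insert_self a Λ))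

lemma le_mul_div_rpow_of_pow_le {k : ℕ} (hk : k ≠ 0) {R C L n T : ℝ} (hR : 0 ≤ R) (hC : 0 < C)
    (hL : 0 < L) (hn : 0 < n) (hT : 0 < T)
    (h : C ^ (2 * k) * (L / n) ^ (2 * k) * T ≤ R ^ k * k ^ k * L ^ k) :
    L ≤ R * C⁻¹ ^ 2 * k * n ^ 2 / T ^ ((1 : ℝ) / k) := by
  have hpow : L ^ k * T ≤ (R * C⁻¹ ^ 2 * k * n ^ 2) ^ k := by
    refine le_of_mul_le_mul_right ?_ (by positivity : 0 < (C / n) ^ (2 * k) * L ^ k)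
    calc L ^ k * T * ((C / n) ^ (2 * k) * L ^ k) = C ^ (2 * k) * (L / n) ^ (2 * k) * T := by
          rw [div_pow, div_pow, pow_mul L]; ring
      _ ≤ R ^ k * k ^ k * L ^ k := h
      _ = (R * C⁻¹ ^ 2 * k * n ^ 2) ^ k * ((C / n) ^ (2 * k) * L ^ k) := by
          rw [pow_mul, ← mul_pow, ← mul_pow, ← mul_pow, ← mul_pow]
          field_simp
  rw [le_div_iff₀ (by positivity)]
  refine le_of_pow_le_pow_left₀ hk (by positivity) ?_
  rwa [mul_pow, one_div, Real.rpow_inv_natCast_pow hT.le hk]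

theorem stmt6_general (k : ℕ) (hk : 2 ≤ k) (C : ℝ) (hC0 : 0 < C)
    (A : Finset G)
    (hconn : ∀ B ⊆ A,
      C ^ (2 * k) * ((B.card : ℝ) / A.card) ^ (2 * k) * (Tk k A : ℝ) ≤ (Tk k B : ℝ))
    (hRudin : ∀ Λ : Finset G, IsDissociated Λ →
      (Tk k Λ : ℝ) ≤ 288 ^ k * (k : ℝ) ^ k * (Λ.card : ℝ) ^ k)
    (Λ : Finset G) (hΛA : Λ ⊆ A) (hdiss : IsDissociated Λ)
    (hmax : ∀ Λ' : Finset G, Λ' ⊆ A → IsDissociated Λ' → Λ ⊆ Λ' → Λ' = Λ) :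
    (Λ.card : ℝ) ≤ 288 * C⁻¹ ^ 2 * k * (A.card : ℝ) ^ 2 / (Tk k A : ℝ) ^ ((1 : ℝ) / k) ∧
      ∀ a ∈ A, a ∈ SpanSet Λ := by
  refine ⟨?_, hdiss.mem_spanSet_of_maximal hΛA hmax⟩
  rcases Λ.eq_empty_or_nonempty with rfl | hΛ
  · simp only [card_empty, Nat.cast_zero]
    positivity
  have hA : A.Nonempty := hΛ.mono hΛA
  exact le_mul_div_rpow_of_pow_le (by omega) (by norm_num) hC0 (by simpa using hΛ.card_pos)
    (by simpa using hA.card_pos) (by exact_mod_cast Tk_pos k hA)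
    ((hconn Λ hΛA).trans (hRudin Λ hdiss))

theorem stmt6 (k : ℕ) (hk : 2 ≤ k) (C : ℝ) (hC0 : 0 < C) (hC1 : C ≤ 1)
    (A : Finset G) (hA : A.Nonempty)
    (hconn : ∀ B ⊆ A,
      C ^ (2 * k) * ((B.card : ℝ) / A.card) ^ (2 * k) * (Tk k A : ℝ) ≤ (Tk k B : ℝ))
    (hRudin : ∀ Λ : Finset G, IsDissociated Λ →
      (Tk k Λ : ℝ) ≤ 288 ^ k * (k : ℝ) ^ k * (Λ.card : ℝ) ^ k)
    (Λ : Finset G) (hΛA : Λ ⊆ A) (hdiss : IsDissociated Λ)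
    (hmax : ∀ Λ' : Finset G, Λ' ⊆ A → IsDissociated Λ' → Λ ⊆ Λ' → Λ' = Λ) :
    (Λ.card : ℝ) ≤ 288 * C⁻¹ ^ 2 * k * (A.card : ℝ) ^ 2 / (Tk k A : ℝ) ^ ((1 : ℝ) / k) ∧
      ∀ a ∈ A, a ∈ SpanSet Λ :=
  stmt6_general k hk C hC0 A hconn hRudin Λ hΛA hdiss hmax
end

section
/- Let k = 2^p with p ≥ 1, let A ⊆ G be finite with |A| ≥ 3, and suppose A is strongly connected of degree k with constant C ∈ (0,1]: for all disjoint E, F with E ⊔ F = A, ∑_x (E∘F)(x)·((A*_{k-2}A)∘(A*_{k-2}A))(x) ≥ C (|E|/|A|)(|F|/|A|) T_k(A). Then A is connected of degree k with constant C/8: for every B ⊆ A, T_k(B) ≥ (C/8)^{2k}(|B|/|A|)^{2k} T_k(A). -/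
/-!
Work in the group algebra `ℝ[G]` with the inner product `⟨f, g⟩ = ∑ₓ f(x) g(x)`, so that
`T_k(X) = ‖1_X^k‖²` and `e(E, F) = ⟨1_E 1_A^{k-1}, 1_F 1_A^{k-1}⟩`. For `B ⊆ A` with
`β = |B|/|A|` put `u = 1_B 1_A^{k-1}`. Strong connectivity for the partition `(B, A ∖ B)`,
Cauchy–Schwarz and `‖1_{A∖B} 1_A^{k-1}‖² ≤ T_k(A)` give `‖u‖² ≥ (Cβ(1-β))² T_k(A)`. Since
`k = 2^p`, iterating `‖fg‖⁴ ≤ ‖f²‖² ‖g²‖²` gives `‖u‖^{2k} ≤ T_k(B) T_k(A)^{k-1}`, hence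
`T_k(B) ≥ (Cβ(1-β))^{2k} T_k(A)`. When `β > 1/2`, apply this to a subset of `B` of size `⌊|A|/2⌋`
instead; this costs the factor `1/8`.
-/

open Finset Pointwise

variable {G : Type*} [AddCommGroup G] [DecidableEq G]

/-- `(E ∘ F)(x)` : number of pairs `(a,b) ∈ E × F` with `a - b = x`. -/
def circ2 (E F : Finset G) (x : G) : ℕ :=
  ((E ×ˢ F).filter fun p => p.1 - p.2 = x).card

/-- `((A *_{k-2} A) ∘ (A *_{k-2} A))(x)` : number of pairs of `(k-1)`-tuples from `A`
whose sums differ by `x`. -/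
def circConv (k : ℕ) (A : Finset G) (x : G) : ℕ :=
  (((Fintype.piFinset fun _ : Fin (k - 1) => A) ×ˢ
      (Fintype.piFinset fun _ : Fin (k - 1) => A)).filter
    fun t => (∑ i, t.1 i) - (∑ i, t.2 i) = x).card

/-- `e(E,F) = ∑_x (E ∘ F)(x) ⬝ ((A *_{k-2} A) ∘ (A *_{k-2} A))(x)`. -/
def eWeight (k : ℕ) (A E F : Finset G) : ℕ :=
  ∑ x ∈ E - F, circ2 E F x * circConv k A x

open AddMonoidAlgebra

namespace StronglyConnected

section FiberCount

variable {G ι κ : Type*}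

noncomputable def fiberCount (S : Finset ι) (σ : ι → G) : ℝ[G] :=
  ∑ s ∈ S, single (σ s) 1

lemma coeff_fiberCount [DecidableEq G] (S : Finset ι) (σ : ι → G) (y : G) :
    (fiberCount S σ).coeff y = #{s ∈ S | σ s = y} := by
  simp [fiberCount, coeff_sum, Finsupp.single_apply]

lemma support_fiberCount_subset [DecidableEq G] (S : Finset ι) (σ : ι → G) :
    (fiberCount S σ).coeff.support ⊆ S.image σ := by
  intro y hy
  rw [Finsupp.mem_support_iff, coeff_fiberCount, Nat.cast_ne_zero, ← pos_iff_ne_zero,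
    card_pos] at hy
  obtain ⟨s, hs⟩ := hy
  rw [mem_filter] at hs
  exact mem_image.mpr ⟨s, hs.1, hs.2⟩

end FiberCount

section GroupAlgebra

variable {G : Type*} [AddCommGroup G] {ι κ : Type*}

noncomputable def reflect : ℝ[G] →+* ℝ[G] := mapDomainRingHom ℝ (negAddMonoidHom : G →+ G)

lemma reflect_single (a : G) (r : ℝ) : reflect (single a r) = single (-a) r :=
  mapDomain_single

lemma coeff_reflect (f : ℝ[G]) (y : G) : (reflect f).coeff y = f.coeff (-y) := by
  have h := Finsupp.mapDomain_apply neg_injective f.coeff (-y)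
  rwa [neg_neg] at h

lemma reflect_reflect (f : ℝ[G]) : reflect (reflect f) = f := by
  ext y
  rw [coeff_reflect, coeff_reflect, neg_neg]

/-- The inner product `∑ₓ f(x) g(x)`, encoded as the value at `0` of `f * g(-·)` so that
identities between inner products of convolutions become ring identities. -/
noncomputable def pairing (f g : ℝ[G]) : ℝ := (f * reflect g).coeff 0

noncomputable def sqNorm (f : ℝ[G]) : ℝ := pairing f f

lemma pairing_eq_sum (f g : ℝ[G]) {S : Finset G} (hS : f.coeff.support ⊆ S) :
    pairing f g = ∑ y ∈ S, f.coeff y * g.coeff y := by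
  rw [pairing, coeff_mul_apply_left, Finsupp.sum]
  simp only [coeff_reflect, add_zero, neg_neg]
  exact sum_subset hS fun y _ hy => by rw [Finsupp.notMem_support_iff.mp hy, zero_mul]

lemma sqNorm_eq_sum (f : ℝ[G]) {S : Finset G} (hS : f.coeff.support ⊆ S) :
    sqNorm f = ∑ y ∈ S, f.coeff y ^ 2 := by
  simp only [sqNorm, pairing_eq_sum f f hS, sq]

lemma sqNorm_nonneg (f : ℝ[G]) : 0 ≤ sqNorm f := by
  rw [sqNorm_eq_sum f subset_rfl]
  positivity

lemma sq_pairing_le (f g : ℝ[G]) : pairing f g ^ 2 ≤ sqNorm f * sqNorm g := by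
  classical
  rw [pairing_eq_sum f g subset_union_left, sqNorm_eq_sum f subset_union_left,
    sqNorm_eq_sum g subset_union_right]
  exact sum_mul_sq_le_sq_mul_sq _ (fun y => f.coeff y) (fun y => g.coeff y)

lemma sqNorm_le_sqNorm {f g : ℝ[G]} (h0 : ∀ y, 0 ≤ f.coeff y) (h : ∀ y, f.coeff y ≤ g.coeff y) :
    sqNorm f ≤ sqNorm g := by
  classical
  rw [sqNorm_eq_sum f subset_union_left, sqNorm_eq_sum g subset_union_right]
  exact sum_le_sum fun y _ => pow_le_pow_left₀ (h0 y) (h y) 2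

lemma pairing_mul_reflect (f g h k : ℝ[G]) :
    pairing (f * reflect g) (h * reflect k) = pairing (f * k) (g * h) := by
  simp only [pairing, map_mul, reflect_reflect]
  ring_nf

lemma sq_sqNorm_mul_le (f g : ℝ[G]) : sqNorm (f * g) ^ 2 ≤ sqNorm (f * f) * sqNorm (g * g) := by
  have hsq (u : ℝ[G]) : sqNorm (u * reflect u) = sqNorm (u * u) := pairing_mul_reflect u u u u
  calc sqNorm (f * g) ^ 2 = pairing (f * reflect f) (g * reflect g) ^ 2 := by
        rw [pairing_mul_reflect, sqNorm]
    _ ≤ sqNorm (f * f) * sqNorm (g * g) := by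
        simpa only [hsq] using sq_pairing_le (f * reflect f) (g * reflect g)

lemma sqNorm_mul_pow_le (p : ℕ) (f g : ℝ[G]) :
    sqNorm (f * g ^ (2 ^ p - 1)) ^ 2 ^ p ≤
      sqNorm (f ^ 2 ^ p) * sqNorm (g ^ 2 ^ p) ^ (2 ^ p - 1) := by
  induction p generalizing f g with
  | zero => simp
  | succ p ih =>
    set K := 2 ^ p
    have hK : 1 ≤ K := Nat.one_le_two_pow
    have h2K : 2 ^ (p + 1) = 2 * K := by rw [pow_succ, mul_comm]
    have hf : f ^ (2 * K) = (f * f) ^ K := by rw [pow_mul, sq]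
    have hg : g ^ (2 * K) = (g * g) ^ K := by rw [pow_mul, sq]
    have hsplit : f * g ^ (2 * K - 1) = f * g ^ (K - 1) * g ^ K := by
      rw [mul_assoc, ← pow_add]; congr 2; omega
    have hstep : sqNorm (f * g ^ (2 * K - 1)) ^ 2 ≤
        sqNorm (f * f * (g * g) ^ (K - 1)) * sqNorm ((g * g) ^ K) := by
      have h := sq_sqNorm_mul_le (f * g ^ (K - 1)) (g ^ K)
      rwa [← hsplit, ← mul_pow g g K, mul_mul_mul_comm, ← mul_pow g g] at h
    rw [h2K, hf, hg, pow_mul]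
    calc (sqNorm (f * g ^ (2 * K - 1)) ^ 2) ^ K
        ≤ sqNorm (f * f * (g * g) ^ (K - 1)) ^ K * sqNorm ((g * g) ^ K) ^ K := by
          rw [← mul_pow]
          exact pow_le_pow_left₀ (sq_nonneg _) hstep K
      _ ≤ sqNorm ((f * f) ^ K) * sqNorm ((g * g) ^ K) ^ (K - 1) * sqNorm ((g * g) ^ K) ^ K :=
          mul_le_mul_of_nonneg_right (ih (f * f) (g * g)) (pow_nonneg (sqNorm_nonneg _) _)
      _ = sqNorm ((f * f) ^ K) * sqNorm ((g * g) ^ K) ^ (2 * K - 1) := by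
          rw [mul_assoc, ← pow_add]; congr 2; omega

lemma sqNorm_fiberCount_le [DecidableEq G] {S T : Finset ι} (h : S ⊆ T) (σ : ι → G) :
    sqNorm (fiberCount S σ) ≤ sqNorm (fiberCount T σ) :=
  sqNorm_le_sqNorm (fun y => by rw [coeff_fiberCount]; positivity) fun y => by
    simp only [coeff_fiberCount]
    exact_mod_cast card_le_card (filter_subset_filter _ h)

lemma fiberCount_mul (S : Finset ι) (T : Finset κ) (σ : ι → G) (τ : κ → G) :
    fiberCount S σ * fiberCount T τ = fiberCount (S ×ˢ T) fun p => σ p.1 + τ p.2 := by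
  simp only [fiberCount, sum_mul_sum, single_mul_single, mul_one, sum_product]

lemma reflect_fiberCount (S : Finset ι) (σ : ι → G) :
    reflect (fiberCount S σ) = fiberCount S fun s => -σ s := by
  simp only [fiberCount, map_sum, reflect_single]

lemma fiberCount_mul_reflect (S : Finset ι) (T : Finset κ) (σ : ι → G) (τ : κ → G) :
    fiberCount S σ * reflect (fiberCount T τ) = fiberCount (S ×ˢ T) fun p => σ p.1 - τ p.2 := by
  simp only [reflect_fiberCount, fiberCount_mul, sub_eq_add_neg]

lemma pairing_fiberCount [DecidableEq G] (S : Finset ι) (T : Finset κ) (σ : ι → G) (τ : κ → G) :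
    pairing (fiberCount S σ) (fiberCount T τ) = #{p ∈ S ×ˢ T | σ p.1 = τ p.2} := by
  simp only [pairing, fiberCount_mul_reflect, coeff_fiberCount, sub_eq_zero]

noncomputable def indicator (X : Finset G) : ℝ[G] := fiberCount X id

lemma indicator_pow (X : Finset G) (n : ℕ) :
    indicator X ^ n = fiberCount (Fintype.piFinset fun _ : Fin n => X) fun t => ∑ i, t i := by
  rw [← Fin.prod_const, indicator, fiberCount, fiberCount, prod_univ_sum]
  simp only [prod_single, prod_const_one, id]

lemma indicator_mul_indicator_pow (E X : Finset G) (n : ℕ) :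
    indicator E * indicator X ^ n =
      fiberCount (E ×ˢ Fintype.piFinset fun _ : Fin n => X) fun q => q.1 + ∑ i, q.2 i := by
  rw [indicator_pow, indicator, fiberCount_mul]
  rfl

end GroupAlgebra

lemma Tk_eq_sqNorm (n : ℕ) (X : Finset G) : (Tk n X : ℝ) = sqNorm (indicator X ^ n) := by
  rw [sqNorm, indicator_pow, pairing_fiberCount, Tk]

lemma eWeight_eq_pairing (k : ℕ) (A E F : Finset G) :
    (eWeight k A E F : ℝ) =
      pairing (indicator E * indicator A ^ (k - 1)) (indicator F * indicator A ^ (k - 1)) := by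
  have hEF : indicator E * reflect (indicator F) = fiberCount (E ×ˢ F) fun p => p.1 - p.2 :=
    fiberCount_mul_reflect _ _ _ _
  rw [← pairing_mul_reflect, hEF, indicator_pow, fiberCount_mul_reflect,
    pairing_eq_sum _ _ ((support_fiberCount_subset _ _).trans image_sub_product.le), eWeight]
  push_cast
  simp only [coeff_fiberCount, circ2, circConv]

lemma Tk_mono (n : ℕ) {X Y : Finset G} (h : X ⊆ Y) : Tk n X ≤ Tk n Y :=
  card_le_card <| filter_subset_filter _ <| product_subset_product
    (Fintype.piFinset_subset _ _ fun _ => h) (Fintype.piFinset_subset _ _ fun _ => h)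

def IsStronglyConnected (k : ℕ) (C : ℝ) (A : Finset G) : Prop :=
  ∀ E F : Finset G, Disjoint E F → E ∪ F = A →
    C * ((E.card : ℝ) / A.card) * ((F.card : ℝ) / A.card) * (Tk k A : ℝ) ≤ (eWeight k A E F : ℝ)

lemma le_Tk_of_subset {p : ℕ} {C : ℝ} {A B : Finset G} (hC : 0 ≤ C)
    (hA : IsStronglyConnected (2 ^ p) C A) (hB : B ⊆ A) :
    (C * ((B.card : ℝ) / A.card) * (((A \ B).card : ℝ) / A.card)) ^ (2 * 2 ^ p) *
      (Tk (2 ^ p) A : ℝ) ≤ Tk (2 ^ p) B := by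
  have hk : 2 ^ p - 1 + 1 = 2 ^ p := Nat.sub_add_cancel Nat.one_le_two_pow
  set x := C * ((B.card : ℝ) / A.card) * (((A \ B).card : ℝ) / A.card)
  set uB := indicator B * indicator A ^ (2 ^ p - 1)
  set uF := indicator (A \ B) * indicator A ^ (2 ^ p - 1)
  have hcross : x * Tk (2 ^ p) A ≤ pairing uB uF := by
    simpa only [eWeight_eq_pairing] using hA B (A \ B) disjoint_sdiff (union_sdiff_of_subset hB)
  have huF : sqNorm uF ≤ Tk (2 ^ p) A := by
    rw [Tk_eq_sqNorm, ← hk, pow_succ']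
    simp only [uF, indicator_mul_indicator_pow]
    exact sqNorm_fiberCount_le (product_subset_product_left sdiff_subset) _
  have hgowers : sqNorm uB ^ 2 ^ p ≤ Tk (2 ^ p) B * (Tk (2 ^ p) A : ℝ) ^ (2 ^ p - 1) := by
    simpa only [Tk_eq_sqNorm] using sqNorm_mul_pow_le p (indicator B) (indicator A)
  generalize (Tk (2 ^ p) A : ℝ) = T at hcross huF hgowers ⊢
  rcases (sqNorm_nonneg uF).trans huF |>.eq_or_lt with hT | hT
  · rw [← hT, mul_zero]
    positivity
  have huB : x ^ 2 * T ≤ sqNorm uB := by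
    refine le_of_mul_le_mul_right ?_ hT
    calc x ^ 2 * T * T = (x * T) ^ 2 := by ring
      _ ≤ pairing uB uF ^ 2 := pow_le_pow_left₀ (by positivity) hcross 2
      _ ≤ sqNorm uB * sqNorm uF := sq_pairing_le uB uF
      _ ≤ sqNorm uB * T := mul_le_mul_of_nonneg_left huF (sqNorm_nonneg uB)
  refine le_of_mul_le_mul_right ?_ (pow_pos hT (2 ^ p - 1))
  calc x ^ (2 * 2 ^ p) * T * T ^ (2 ^ p - 1) = (x ^ 2 * T) ^ 2 ^ p := by
        rw [mul_assoc, ← pow_succ' T, hk, mul_pow (x ^ 2), ← pow_mul]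
    _ ≤ sqNorm uB ^ 2 ^ p := by gcongr
    _ ≤ Tk (2 ^ p) B * T ^ (2 ^ p - 1) := hgowers

lemma exists_subset_balanced {α : Type*} [DecidableEq α] {A B : Finset α} (hA : 2 ≤ A.card)
    (hB : B ⊆ A) :
    ∃ B' ⊆ B, (B.card : ℝ) / A.card / 8 ≤
      (B'.card : ℝ) / A.card * (((A \ B').card : ℝ) / A.card) := by
  suffices ∃ B' ⊆ B, B.card * A.card ≤ 8 * (B'.card * (A \ B').card) by
    obtain ⟨B', hB', h⟩ := this
    refine ⟨B', hB', ?_⟩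
    have hApos : (0 : ℝ) < A.card := by exact_mod_cast (by omega : 0 < A.card)
    rw [div_mul_div_comm, div_div, div_le_div_iff₀ (by positivity) (by positivity)]
    have h' : ((B.card * A.card : ℕ) : ℝ) ≤ ((8 * (B'.card * (A \ B').card) : ℕ) : ℝ) := by
      exact_mod_cast h
    push_cast at h'
    nlinarith
  have hBA := card_le_card hB
  by_cases hsmall : 2 * B.card ≤ A.card
  · refine ⟨B, subset_rfl, ?_⟩
    have := card_sdiff_add_card_eq_card hB
    nlinarith
  · obtain ⟨B', hB'B, hB'⟩ := exists_subset_card_eq (show A.card / 2 ≤ B.card by omega)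
    refine ⟨B', hB'B, ?_⟩
    have := card_sdiff_add_card_eq_card (hB'B.trans hB)
    have h3 : A.card ≤ 3 * B'.card := by omega
    have h2 : A.card ≤ 2 * (A \ B').card := by omega
    nlinarith [Nat.mul_le_mul h3 h2]

end StronglyConnected

open StronglyConnected in
theorem stmt10_general (p : ℕ) (A : Finset G) (hA : 3 ≤ A.card)
    (C : ℝ) (hC0 : 0 < C)
    (hconn : ∀ E F : Finset G, Disjoint E F → E ∪ F = A →
      C * ((E.card : ℝ) / A.card) * ((F.card : ℝ) / A.card) * (Tk (2 ^ p) A : ℝ) ≤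
        (eWeight (2 ^ p) A E F : ℝ)) :
    ∀ B ⊆ A,
      (C / 8) ^ (2 * 2 ^ p) * ((B.card : ℝ) / A.card) ^ (2 * 2 ^ p) * (Tk (2 ^ p) A : ℝ) ≤
        (Tk (2 ^ p) B : ℝ) := by
  intro B hB
  obtain ⟨B', hB'B, hbalanced⟩ := exists_subset_balanced (by omega) hB
  calc (C / 8) ^ (2 * 2 ^ p) * ((B.card : ℝ) / A.card) ^ (2 * 2 ^ p) * (Tk (2 ^ p) A : ℝ)
      = (C * ((B.card : ℝ) / A.card / 8)) ^ (2 * 2 ^ p) * (Tk (2 ^ p) A : ℝ) := by ring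
    _ ≤ (C * ((B'.card : ℝ) / A.card) * (((A \ B').card : ℝ) / A.card)) ^ (2 * 2 ^ p) *
          (Tk (2 ^ p) A : ℝ) := by
        rw [mul_assoc C]
        gcongr
    _ ≤ Tk (2 ^ p) B' := le_Tk_of_subset hC0.le hconn (hB'B.trans hB)
    _ ≤ Tk (2 ^ p) B := by exact_mod_cast Tk_mono _ hB'B

theorem stmt10 (p : ℕ) (hp : 1 ≤ p) (A : Finset G) (hA : 3 ≤ A.card)
    (C : ℝ) (hC0 : 0 < C) (hC1 : C ≤ 1)
    (hconn : ∀ E F : Finset G, Disjoint E F → E ∪ F = A →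
      C * ((E.card : ℝ) / A.card) * ((F.card : ℝ) / A.card) * (Tk (2 ^ p) A : ℝ) ≤
        (eWeight (2 ^ p) A E F : ℝ)) :
    ∀ B ⊆ A,
      (C / 8) ^ (2 * 2 ^ p) * ((B.card : ℝ) / A.card) ^ (2 * 2 ^ p) * (Tk (2 ^ p) A : ℝ) ≤
        (Tk (2 ^ p) B : ℝ) :=
  stmt10_general p A hA C hC0 hconn
end

section
/- Let k ≥ 2 be an integer, C ∈ (0,1], and A ⊆ G a finite set that is strongly connected of degree k with constant C: for all partitions A = E ⊔ F into nonempty disjoint sets, ∑_x (E∘F)(x)·((A*_{k-2}A)∘(A*_{k-2}A))(x) ≥ C(|E|/|A|)(|F|/|A|)T_k(A). Define S = {h ∈ G : ((A*_{k-2}A)∘(A*_{k-2}A))(h) ≥ C·T_k(A)/|A|^2}. Then A is contained in a single coset of the subgroup ⟨S⟩ generated by S; i.e., there exists a ∈ G with A ⊆ ⟨S⟩ + a. -/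
open Finset Pointwise

variable {G : Type*} [AddCommGroup G] [DecidableEq G]

/-!
Fix `a ∈ A` and let `E` be the part of `A` in the coset `⟨S⟩ + a`, `F` the rest. If `F` were
nonempty, strong connectivity would give `e(E,F) ≥ |E| |F| θ` with `θ = C T_k(A) / |A|²`.
Since the weights `(E ∘ F)(x)` sum to `|E| |F|`, some difference `x = e - f` with `e ∈ E`,
`f ∈ F` has `((A *_{k-2} A) ∘ (A *_{k-2} A))(x) ≥ θ`, i.e. `x ∈ S`, which puts `f` in the coset.
-/

theorem sum_circ2_eq_card_mul (E F : Finset G) : ∑ x ∈ E - F, circ2 E F x = #E * #F := by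
  rw [← card_product,
    card_eq_sum_card_fiberwise (f := fun p : G × G => p.1 - p.2) fun p hp => ?_]
  · rfl
  · obtain ⟨hp₁, hp₂⟩ := mem_product.mp hp
    exact sub_mem_sub hp₁ hp₂

theorem circ2_pos_of_mem_sub {E F : Finset G} {x : G} (hx : x ∈ E - F) : 0 < circ2 E F x := by
  obtain ⟨e, he, f, hf, rfl⟩ := mem_sub.mp hx
  exact card_pos.mpr ⟨(e, f), by simp [he, hf]⟩

theorem exists_le_apply_sub_of_card_mul_le_sum_circ2_mul {E F : Finset G} (c : G → ℝ) (θ : ℝ)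
    (hE : E.Nonempty) (hF : F.Nonempty)
    (h : #E * #F * θ ≤ ∑ x ∈ E - F, circ2 E F x * c x) :
    ∃ e ∈ E, ∃ f ∈ F, θ ≤ c (e - f) := by
  have hsum : ∑ x ∈ E - F, (circ2 E F x : ℝ) * θ ≤ ∑ x ∈ E - F, circ2 E F x * c x := by
    rw [← sum_mul, ← Nat.cast_sum, sum_circ2_eq_card_mul]
    exact_mod_cast h
  obtain ⟨x, hx, hle⟩ := exists_le_of_sum_le (hE.sub hF) hsum
  obtain ⟨e, he, f, hf, rfl⟩ := mem_sub.mp hx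
  exact ⟨e, he, f, hf, le_of_mul_le_mul_left hle (by exact_mod_cast circ2_pos_of_mem_sub hx)⟩

theorem AddSubgroup.exists_forall_sub_mem_of_forall_partition (A : Finset G) (H : AddSubgroup G)
    (h : ∀ E F : Finset G, E.Nonempty → F.Nonempty → Disjoint E F → E ∪ F = A →
      ∃ e ∈ E, ∃ f ∈ F, e - f ∈ H) :
    ∃ a : G, ∀ x ∈ A, x - a ∈ H := by
  classical
  rcases A.eq_empty_or_nonempty with rfl | ⟨a, ha⟩
  · exact ⟨0, by simp⟩
  refine ⟨a, ?_⟩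
  by_contra! ⟨x, hx, hxa⟩
  set E := A.filter (· - a ∈ H)
  obtain ⟨e, he, f, hf, hef⟩ := h E (A \ E) ⟨a, by simp [E, ha]⟩ ⟨x, by simp [E, hx, hxa]⟩
    disjoint_sdiff (union_sdiff_of_subset (filter_subset _ _))
  have hfa : f - a ∈ H := by
    simpa using H.sub_mem (mem_filter.mp he).2 hef
  exact (mem_sdiff.mp hf).2 (mem_filter.mpr ⟨(mem_sdiff.mp hf).1, hfa⟩)

theorem stmt11_general (k : ℕ) (A : Finset G) (C : ℝ)
    (hconn : ∀ E F : Finset G, E.Nonempty → F.Nonempty → Disjoint E F → E ∪ F = A →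
      C * ((E.card : ℝ) / A.card) * ((F.card : ℝ) / A.card) * (Tk k A : ℝ) ≤
        (eWeight k A E F : ℝ)) :
    ∃ a : G, ∀ x ∈ A,
      x - a ∈ AddSubgroup.closure
        {h : G | C * (Tk k A : ℝ) / (A.card : ℝ) ^ 2 ≤ (circConv k A h : ℝ)} := by
  refine AddSubgroup.exists_forall_sub_mem_of_forall_partition A _
    fun E F hE hF hEF hEFA => ?_
  obtain ⟨e, he, f, hf, hθ⟩ := exists_le_apply_sub_of_card_mul_le_sum_circ2_mul
    (fun x => (circConv k A x : ℝ)) (C * Tk k A / #A ^ 2) hE hF <| calc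
      (#E * #F * (C * Tk k A / #A ^ 2) : ℝ)
          = C * ((#E : ℝ) / #A) * ((#F : ℝ) / #A) * Tk k A := by ring
      _ ≤ eWeight k A E F := hconn E F hE hF hEF hEFA
      _ = ∑ x ∈ E - F, (circ2 E F x : ℝ) * circConv k A x := by simp [eWeight]
  exact ⟨e, he, f, hf, AddSubgroup.subset_closure hθ⟩

theorem stmt11 (k : ℕ) (hk : 2 ≤ k) (A : Finset G) (C : ℝ) (hC0 : 0 < C) (hC1 : C ≤ 1)
    (hconn : ∀ E F : Finset G, E.Nonempty → F.Nonempty → Disjoint E F → E ∪ F = A →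
      C * ((E.card : ℝ) / A.card) * ((F.card : ℝ) / A.card) * (Tk k A : ℝ) ≤
        (eWeight k A E F : ℝ)) :
    ∃ a : G, ∀ x ∈ A,
      x - a ∈ AddSubgroup.closure
        {h : G | C * (Tk k A : ℝ) / (A.card : ℝ) ^ 2 ≤ (circConv k A h : ℝ)} :=
  stmt11_general k A C hconn
end

section
/- Let k ≥ 2 be an integer, ε₁ ∈ [0,1], and A ⊆ G a finite set. Define e(E,F) = ∑_x (E∘F)(x)·((A*_{k-2}A)∘(A*_{k-2}A))(x) for E, F ⊆ A, and c_E = |E|/|A|. Then there exists a partition A = A_1 ⊔ ⋯ ⊔ A_l such that: (1) e(A_i, A_j) ≤ ε₁ c_{A_i} c_{A_j} T_k(A) for all i ≠ j; and (2) for each i and each partition A_i = E ⊔ F into disjoint sets, e(E,F) ≥ ε₁ c_E c_F T_k(A). -/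
/-!
The weight `w(E,F) = e(E,F) - ε₁ c_E c_F T_k(A)` is symmetric and additive over disjoint unions
in each argument (`e(E,F)` is the sum of `((A *_{k-2} A) ∘ (A *_{k-2} A))(a - b)` over
`(a, b) ∈ E × F`, and that function is even). Hence `∑_{i<j} w(A_i,A_j)` equals
`(w(A,A) - ∑_i w(A_i,A_i)) / 2`, and the paper's minimizing partition is one maximizing
`∑_i w(A_i,A_i)`. Merging two parts `A_i, A_j` changes this sum by `2 w(A_i,A_j)` and splitting a
part into `E ⊔ F` changes it by `-2 w(E,F)`, so maximality gives both conditions.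
-/

open Finset Pointwise

variable {G : Type*} [AddCommGroup G] [DecidableEq G]

namespace Finpartition

variable {α : Type*} [DistribLattice α] [OrderBot α] [DecidableEq α] {a : α}

lemma disjoint_sup_of_mem_sdiff (P : Finpartition a) {S : Finset α} (hS : S ⊆ P.parts) {b : α}
    (hb : b ∈ P.parts \ S) : Disjoint b (S.sup id) := by
  rw [Finset.mem_sdiff] at hb
  exact Finset.disjoint_sup_right.mpr fun c hc =>
    P.disjoint hb.1 (hS hc) (ne_of_mem_of_not_mem hc hb.2).symm

def replace (P : Finpartition a) {S : Finset α} (hS : S ⊆ P.parts)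
    (Q : Finpartition (S.sup id)) : Finpartition a where
  parts := P.parts \ S ∪ Q.parts
  supIndep := by
    rw [Finset.supIndep_iff_pairwiseDisjoint, Finset.coe_union]
    refine (P.disjoint.subset Finset.sdiff_subset).union Q.disjoint fun b hb c hc _ => ?_
    exact (P.disjoint_sup_of_mem_sdiff hS hb).mono_right (Q.le hc)
  sup_parts := by
    rw [Finset.sup_union, Q.sup_parts, ← Finset.sup_union, Finset.sdiff_union_of_subset hS,
      P.sup_parts]
  bot_notMem := by
    simp only [Finset.mem_union, Finset.mem_sdiff, P.bot_notMem, Q.bot_notMem, false_and,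
      or_self, not_false_eq_true]

lemma sum_replace_add {M : Type*} [AddCommMonoid M] (P : Finpartition a) {S : Finset α}
    (hS : S ⊆ P.parts) (Q : Finpartition (S.sup id)) (g : α → M) :
    ∑ p ∈ (P.replace hS Q).parts, g p + ∑ p ∈ S, g p =
      ∑ p ∈ P.parts, g p + ∑ p ∈ Q.parts, g p := by
  have hdisj : Disjoint (P.parts \ S) Q.parts := Finset.disjoint_left.mpr fun b hb hbQ =>
    Q.ne_bot hbQ ((P.disjoint_sup_of_mem_sdiff hS hb).eq_bot_of_le (Q.le hbQ))
  rw [replace, Finset.sum_union hdisj, add_right_comm, Finset.sum_sdiff hS]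

section Maximal

variable {M : Type*} [AddCommMonoid M] [LinearOrder M] [IsOrderedCancelAddMonoid M]
  {g : α → M} {P : Finpartition a}

lemma sum_parts_le_of_forall_sum_le
    (hP : ∀ P' : Finpartition a, ∑ p ∈ P'.parts, g p ≤ ∑ p ∈ P.parts, g p)
    {S : Finset α} (hS : S ⊆ P.parts) (Q : Finpartition (S.sup id)) :
    ∑ p ∈ Q.parts, g p ≤ ∑ p ∈ S, g p := by
  have h := P.sum_replace_add hS Q g
  have := hP (P.replace hS Q)
  exact le_of_add_le_add_left (a := ∑ p ∈ P.parts, g p) (by rw [← h]; gcongr)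

lemma map_sup_le_add_of_forall_sum_le
    (hP : ∀ P' : Finpartition a, ∑ p ∈ P'.parts, g p ≤ ∑ p ∈ P.parts, g p)
    {b c : α} (hb : b ∈ P.parts) (hc : c ∈ P.parts) (hbc : b ≠ c) :
    g (b ⊔ c) ≤ g b + g c := by
  have hsup : ({b, c} : Finset α).sup id ≠ ⊥ :=
    ne_bot_of_le_ne_bot (P.ne_bot hb) (Finset.le_sup (f := id) (Finset.mem_insert_self b {c}))
  simpa [Finset.sum_pair hbc] using
    sum_parts_le_of_forall_sum_le hP (Finset.insert_subset hb (Finset.singleton_subset_iff.mpr hc))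
      (indiscrete hsup)

lemma add_le_map_of_forall_sum_le
    (hP : ∀ P' : Finpartition a, ∑ p ∈ P'.parts, g p ≤ ∑ p ∈ P.parts, g p)
    {b e f : α} (hb : b ∈ P.parts) (he : e ≠ ⊥) (hf : f ≠ ⊥) (hef : Disjoint e f)
    (hefb : e ⊔ f = b) : g e + g f ≤ g b := by
  have hfe : f ≠ e := fun h => he (by simpa [h] using hef)
  have h := sum_parts_le_of_forall_sum_le hP (Finset.singleton_subset_iff.mpr hb)
    ((indiscrete he).extend hf hef (by simpa using hefb))
  rwa [extend_parts, indiscrete_parts, Finset.sum_pair hfe, Finset.sum_singleton, add_comm] at h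

end Maximal

end Finpartition

section Weight

variable (k : ℕ) (ε₁ : ℝ) (A : Finset G)

lemma circConv_neg (x : G) : circConv k A (-x) = circConv k A x := by
  refine Finset.card_nbij' Prod.swap Prod.swap ?_ ?_ (fun _ _ => rfl) (fun _ _ => rfl) <;>
  · rintro ⟨s, t⟩ hst
    simp only [Finset.coe_filter, Finset.mem_product, Set.mem_ofPred_eq,
      Prod.swap_prod_mk] at hst ⊢
    exact ⟨hst.1.symm, by simpa using congrArg Neg.neg hst.2⟩

lemma eWeight_eq_sum_product (E F : Finset G) :
    eWeight k A E F = ∑ p ∈ E ×ˢ F, circConv k A (p.1 - p.2) := by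
  rw [Finset.sum_comp, eWeight, Finset.sub_def]
  exact Finset.sum_congr rfl fun x _ => by rw [smul_eq_mul, circ2]

lemma eWeight_comm (E F : Finset G) : eWeight k A E F = eWeight k A F E := by
  rw [eWeight_eq_sum_product, eWeight_eq_sum_product, Finset.sum_product,
    Finset.sum_product_right]
  refine Finset.sum_congr rfl fun a _ => Finset.sum_congr rfl fun b _ => ?_
  rw [← neg_sub, circConv_neg]

lemma eWeight_union_left {E E' : Finset G} (h : Disjoint E E') (F : Finset G) :
    eWeight k A (E ∪ E') F = eWeight k A E F + eWeight k A E' F := by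
  simp only [eWeight_eq_sum_product, Finset.union_product]
  exact Finset.sum_union (Finset.disjoint_product.mpr (Or.inl h))

/-- `e(E,F) - ε₁ c_E c_F T_k(A)`, the summand of the functional that the paper minimizes. -/
noncomputable def excess (E F : Finset G) : ℝ :=
  (eWeight k A E F : ℝ) -
    ε₁ * ((E.card : ℝ) / A.card) * ((F.card : ℝ) / A.card) * (Tk k A : ℝ)

lemma excess_comm (E F : Finset G) : excess k ε₁ A E F = excess k ε₁ A F E := by
  rw [excess, excess, eWeight_comm]
  ring

lemma excess_union_left {E E' : Finset G} (h : Disjoint E E') (F : Finset G) :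
    excess k ε₁ A (E ∪ E') F = excess k ε₁ A E F + excess k ε₁ A E' F := by
  simp only [excess, eWeight_union_left k A h, Finset.card_union_of_disjoint h]
  push_cast
  ring

lemma excess_union_union {E F : Finset G} (h : Disjoint E F) :
    excess k ε₁ A (E ∪ F) (E ∪ F) =
      excess k ε₁ A E E + excess k ε₁ A F F + 2 * excess k ε₁ A E F := by
  rw [excess_union_left k ε₁ A h, excess_comm k ε₁ A E, excess_comm k ε₁ A F,
    excess_union_left k ε₁ A h, excess_union_left k ε₁ A h, excess_comm k ε₁ A F E]
  ring

lemma excess_empty_left (F : Finset G) : excess k ε₁ A ∅ F = 0 := by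
  simp [excess, eWeight]

end Weight

lemma Finset.biUnion_equivFin_symm {α : Type*} [DecidableEq α] (S : Finset (Finset α)) :
    Finset.univ.biUnion (fun i => (S.equivFin.symm i : Finset α)) = S.biUnion id := by
  ext x
  simp only [Finset.mem_biUnion, Finset.mem_univ, true_and, id]
  exact ⟨fun ⟨i, hx⟩ => ⟨_, (S.equivFin.symm i).2, hx⟩,
    fun ⟨B, hB, hx⟩ => ⟨S.equivFin ⟨B, hB⟩, by simpa using hx⟩⟩

theorem stmt12_general (k : ℕ) (ε₁ : ℝ) (A : Finset G) :
    ∃ (l : ℕ) (𝒜 : Fin l → Finset G),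
      (∀ i j, i ≠ j → Disjoint (𝒜 i) (𝒜 j)) ∧
      (Finset.univ.biUnion 𝒜 = A) ∧
      (∀ i j, i ≠ j →
        (eWeight k A (𝒜 i) (𝒜 j) : ℝ) ≤
          ε₁ * ((𝒜 i).card / A.card : ℝ) * ((𝒜 j).card / A.card : ℝ) * (Tk k A : ℝ)) ∧
      (∀ i, ∀ E F : Finset G, Disjoint E F → E ∪ F = 𝒜 i →
        ε₁ * ((E.card : ℝ) / A.card) * ((F.card : ℝ) / A.card) * (Tk k A : ℝ) ≤
          (eWeight k A E F : ℝ)) := by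
  obtain ⟨P, hP⟩ :=
    Finite.exists_max fun P : Finpartition A => ∑ B ∈ P.parts, excess k ε₁ A B B
  let e := P.parts.equivFin.symm
  have he_ne {i j} (hij : i ≠ j) : (e i : Finset G) ≠ e j :=
    fun h => hij (e.injective (Subtype.ext h))
  have he_disj {i j} (hij : i ≠ j) : Disjoint (e i : Finset G) (e j) :=
    P.disjoint (e i).2 (e j).2 (he_ne hij)
  refine ⟨P.parts.card, fun i => e i, fun i j hij => he_disj hij,
    by rw [Finset.biUnion_equivFin_symm, P.biUnion_parts], fun i j hij => ?_,
    fun i E F hEF hEFi => ?_⟩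
  · have h := P.map_sup_le_add_of_forall_sum_le hP (e i).2 (e j).2 (he_ne hij)
    rw [Finset.sup_eq_union, excess_union_union k ε₁ A (he_disj hij)] at h
    have : excess k ε₁ A (e i) (e j) ≤ 0 := by linarith
    exact sub_nonpos.mp this
  · suffices 0 ≤ excess k ε₁ A E F from sub_nonneg.mp this
    rcases E.eq_empty_or_nonempty with rfl | hE
    · rw [excess_empty_left]
    rcases F.eq_empty_or_nonempty with rfl | hF
    · rw [excess_comm, excess_empty_left]
    have h := P.add_le_map_of_forall_sum_le hP (e i).2 hE.ne_empty hF.ne_empty hEF hEFi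
    rw [← show E ∪ F = e i from hEFi, excess_union_union k ε₁ A hEF] at h
    linarith

theorem stmt12 (k : ℕ) (hk : 2 ≤ k) (ε₁ : ℝ) (hε₁0 : 0 ≤ ε₁) (hε₁1 : ε₁ ≤ 1)
    (A : Finset G) :
    ∃ (l : ℕ) (𝒜 : Fin l → Finset G),
      (∀ i j, i ≠ j → Disjoint (𝒜 i) (𝒜 j)) ∧
      (Finset.univ.biUnion 𝒜 = A) ∧
      (∀ i j, i ≠ j →
        (eWeight k A (𝒜 i) (𝒜 j) : ℝ) ≤
          ε₁ * ((𝒜 i).card / A.card : ℝ) * ((𝒜 j).card / A.card : ℝ) * (Tk k A : ℝ)) ∧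
      (∀ i, ∀ E F : Finset G, Disjoint E F → E ∪ F = 𝒜 i →
        ε₁ * ((E.card : ℝ) / A.card) * ((F.card : ℝ) / A.card) * (Tk k A : ℝ) ≤
          (eWeight k A E F : ℝ)) :=
  stmt12_general k ε₁ A
end

section
/- Let k ≥ 2, ε₁ ∈ [0,1], and A ⊆ G finite. Suppose A = A_1 ⊔ ⋯ ⊔ A_l is a partition such that e(A_i, A_j) ≤ ε₁ (|A_i|/|A|)(|A_j|/|A|) T_k(A) for all i ≠ j, where e(E,F) = ∑_x (E∘F)(x)·((A*_{k-2}A)∘(A*_{k-2}A))(x). Then ∑_{i=1}^l T_k(A_i) ≥ (1 − (2k−1)ε₁)·T_k(A). -/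
open Finset Pointwise

variable {G : Type*} [AddCommGroup G] [DecidableEq G]

/-!
Take a solution `x₁ + ⋯ + x_k = y₁ + ⋯ + y_k` in `A` and let `x₁ ∈ A_i`. Either it lies
entirely in `A_i`, or one of the `2k - 1` coordinate pairs `(x₁, y_m)` (`1 ≤ m ≤ k`) and `(x_m, y₁)`
(`2 ≤ m ≤ k`) meets two different parts. Solutions with `x_p ∈ E`, `y_q ∈ F` inject into the quadruples
counted by `e(E, F)`, so each of these `2k - 1` events has at most `∑_{i ≠ j} e(A_i, A_j)`
solutions, and this sum is at most `ε₁ T_k(A)` since `∑_i |A_i| / |A| ≤ 1`.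
-/

def energyTuples (k : ℕ) (A : Finset G) : Finset ((Fin k → G) × (Fin k → G)) :=
  ((Fintype.piFinset fun _ : Fin k => A) ×ˢ (Fintype.piFinset fun _ : Fin k => A)).filter
    fun t => ∑ i, t.1 i = ∑ i, t.2 i

lemma mem_energyTuples {k : ℕ} {A : Finset G} {t : (Fin k → G) × (Fin k → G)} :
    t ∈ energyTuples k A ↔ (∀ i, t.1 i ∈ A) ∧ (∀ i, t.2 i ∈ A) ∧ ∑ i, t.1 i = ∑ i, t.2 i := by
  simp [energyTuples, and_assoc]

lemma eWeight_succ_eq_card (n : ℕ) (A E F : Finset G) :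
    eWeight (n + 1) A E F =
      (((E ×ˢ F) ×ˢ ((Fintype.piFinset fun _ : Fin n => A) ×ˢ
          (Fintype.piFinset fun _ : Fin n => A))).filter fun q =>
        q.1.1 - q.1.2 = (∑ i, q.2.1 i) - (∑ i, q.2.2 i)).card := by
  rw [card_eq_sum_card_fiberwise (f := fun q => q.1.1 - q.1.2) (t := E - F)]
  · refine sum_congr rfl fun x _ => ?_
    rw [circ2, circConv, ← card_product, filter_filter]
    congr 1
    ext ⟨⟨a, b⟩, u, v⟩
    simp only [mem_filter, mem_product]
    constructor
    · rintro ⟨⟨hab, rfl⟩, huv, h⟩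
      exact ⟨⟨hab, huv⟩, h.symm, rfl⟩
    · rintro ⟨⟨hab, huv⟩, h, rfl⟩
      exact ⟨⟨hab, rfl⟩, huv, h.symm⟩
  · rintro ⟨⟨a, b⟩, u, v⟩ hq
    simp only [coe_filter, Set.mem_ofPred_eq, mem_product] at hq
    exact sub_mem_sub hq.1.1.1 hq.1.1.2

/-- The injection is `(x, y) ↦ (x_p, y_q, y without y_q, x without x_p)`, since
`x_p - y_q = ∑_{j ≠ q} y_j - ∑_{i ≠ p} x_i`. -/
lemma card_filter_energyTuples_le_eWeight (n : ℕ) (A E F : Finset G) (p q : Fin (n + 1)) :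
    ((energyTuples (n + 1) A).filter fun t => t.1 p ∈ E ∧ t.2 q ∈ F).card ≤
      eWeight (n + 1) A E F := by
  rw [eWeight_succ_eq_card]
  refine card_le_card_of_injOn
    (fun t => ((t.1 p, t.2 q), (Fin.removeNth (α := fun _ => G) q t.2,
      Fin.removeNth (α := fun _ => G) p t.1))) ?_ ?_
  · intro t ht
    simp only [coe_filter, Set.mem_ofPred_eq, mem_energyTuples] at ht
    obtain ⟨⟨hx, hy, hsum⟩, hp, hq⟩ := ht
    simp only [coe_filter, Set.mem_ofPred_eq, mem_product, Fintype.mem_piFinset, Fin.removeNth]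
    refine ⟨⟨⟨hp, hq⟩, fun _ => hy _, fun _ => hx _⟩, ?_⟩
    rwa [sub_eq_sub_iff_add_eq_add, ← Fin.sum_univ_succAbove t.1 p, add_comm _ (t.2 q),
      ← Fin.sum_univ_succAbove t.2 q]
  · rintro ⟨x, y⟩ - ⟨x', y'⟩ - h
    simp only [Prod.mk.injEq] at h
    obtain ⟨⟨hxp, hyq⟩, hy, hx⟩ := h
    rw [← Fin.insertNth_self_removeNth p x, ← Fin.insertNth_self_removeNth p x', hxp, hx,
      ← Fin.insertNth_self_removeNth q y, ← Fin.insertNth_self_removeNth q y', hyq, hy]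

section Partition

variable {ι : Type*} [Fintype ι]

def crossTuples (k : ℕ) (A : Finset G) (𝒜 : ι → Finset G) (p q : Fin k) :
    Finset ((Fin k → G) × (Fin k → G)) :=
  (energyTuples k A).filter fun t =>
    ∃ ij ∈ (univ : Finset ι).offDiag, t.1 p ∈ 𝒜 ij.1 ∧ t.2 q ∈ 𝒜 ij.2

lemma card_crossTuples_le (n : ℕ) (A : Finset G) (𝒜 : ι → Finset G) (p q : Fin (n + 1)) :
    (crossTuples (n + 1) A 𝒜 p q).card ≤
      ∑ ij ∈ (univ : Finset ι).offDiag, eWeight (n + 1) A (𝒜 ij.1) (𝒜 ij.2) := by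
  calc (crossTuples (n + 1) A 𝒜 p q).card
      ≤ (univ.offDiag.biUnion fun ij : ι × ι =>
          (energyTuples (n + 1) A).filter fun t => t.1 p ∈ 𝒜 ij.1 ∧ t.2 q ∈ 𝒜 ij.2).card := by
        refine card_le_card fun t ht => ?_
        obtain ⟨ht, ij, hij, hmem⟩ := mem_filter.1 ht
        exact mem_biUnion.2 ⟨ij, hij, mem_filter.2 ⟨ht, hmem⟩⟩
    _ ≤ _ := card_biUnion_le.trans <|
        sum_le_sum fun ij _ => card_filter_energyTuples_le_eWeight n A _ _ p q

lemma energyTuples_subset_union (n : ℕ) (A : Finset G) (𝒜 : ι → Finset G)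
    (hcover : univ.biUnion 𝒜 = A) :
    energyTuples (n + 1) A ⊆
      (univ.biUnion fun i => energyTuples (n + 1) (𝒜 i)) ∪
        (univ.biUnion fun m => crossTuples (n + 1) A 𝒜 0 m) ∪
        (univ.biUnion fun m : Fin n => crossTuples (n + 1) A 𝒜 m.succ 0) := by
  intro t ht
  have hpart : ∀ a ∈ A, ∃ i, a ∈ 𝒜 i := fun a ha => by
    rw [← hcover] at ha
    simpa using ha
  have hne : ∀ {i j : ι} {a : G}, a ∉ 𝒜 i → a ∈ 𝒜 j → i ≠ j := fun hi hj h => hi (h ▸ hj)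
  obtain ⟨hx, hy, hsum⟩ := mem_energyTuples.1 ht
  obtain ⟨i, hi⟩ := hpart _ (hx 0)
  simp only [mem_union, mem_biUnion, mem_univ, true_and, crossTuples, mem_filter, mem_offDiag,
    Prod.exists]
  by_cases hyi : ∀ m, t.2 m ∈ 𝒜 i
  · by_cases hxi : ∀ m, t.1 m ∈ 𝒜 i
    · exact .inl (.inl ⟨i, mem_energyTuples.2 ⟨hxi, hyi, hsum⟩⟩)
    · obtain ⟨m, hm⟩ := not_forall.1 hxi
      obtain ⟨m, rfl⟩ := Fin.exists_succ_eq_of_ne_zero (fun h : m = 0 => hm (h ▸ hi))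
      obtain ⟨j, hj⟩ := hpart _ (hx m.succ)
      exact .inr ⟨m, ht, j, i, (hne hm hj).symm, hj, hyi 0⟩
  · obtain ⟨m, hm⟩ := not_forall.1 hyi
    obtain ⟨j, hj⟩ := hpart _ (hy m)
    exact .inl (.inr ⟨m, ht, i, j, hne hm hj, hi, hj⟩)

theorem Tk_le_sum_Tk_add_mul_sum_eWeight (n : ℕ) (A : Finset G) (𝒜 : ι → Finset G)
    (hcover : univ.biUnion 𝒜 = A) :
    Tk (n + 1) A ≤ ∑ i, Tk (n + 1) (𝒜 i) +
      (2 * n + 1) * ∑ ij ∈ (univ : Finset ι).offDiag, eWeight (n + 1) A (𝒜 ij.1) (𝒜 ij.2) := by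
  set S := ∑ ij ∈ (univ : Finset ι).offDiag, eWeight (n + 1) A (𝒜 ij.1) (𝒜 ij.2)
  calc Tk (n + 1) A = (energyTuples (n + 1) A).card := rfl
    _ ≤ (univ.biUnion fun i => energyTuples (n + 1) (𝒜 i)).card +
          (univ.biUnion fun m => crossTuples (n + 1) A 𝒜 0 m).card +
          (univ.biUnion fun m : Fin n => crossTuples (n + 1) A 𝒜 m.succ 0).card :=
        (card_le_card (energyTuples_subset_union n A 𝒜 hcover)).trans <|
          (card_union_le _ _).trans <| by gcongr; exact card_union_le _ _
    _ ≤ ∑ i, Tk (n + 1) (𝒜 i) + ∑ _m : Fin (n + 1), S + ∑ _m : Fin n, S := by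
        gcongr
        · exact card_biUnion_le
        · exact card_biUnion_le.trans <| sum_le_sum fun m _ => card_crossTuples_le n A 𝒜 0 m
        · exact card_biUnion_le.trans <|
            sum_le_sum fun m _ => card_crossTuples_le n A 𝒜 m.succ 0
    _ = ∑ i, Tk (n + 1) (𝒜 i) + (2 * n + 1) * S := by
        simp only [sum_const, card_univ, Fintype.card_fin, smul_eq_mul]
        ring

lemma sum_offDiag_mul_le_sq_sum (f : ι → ℝ) (hf : ∀ i, 0 ≤ f i) :
    ∑ ij ∈ (univ : Finset ι).offDiag, f ij.1 * f ij.2 ≤ (∑ i, f i) ^ 2 := by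
  rw [sq, sum_mul_sum, ← sum_product']
  exact sum_le_sum_of_subset_of_nonneg (fun ij hij => by simp)
    fun ij _ _ => mul_nonneg (hf _) (hf _)

lemma sum_offDiag_eWeight_le (k : ℕ) (ε : ℝ) (hε : 0 ≤ ε) (A : Finset G) (𝒜 : ι → Finset G)
    (hdisj : ∀ i j, i ≠ j → Disjoint (𝒜 i) (𝒜 j)) (hcover : univ.biUnion 𝒜 = A)
    (hcross : ∀ i j, i ≠ j →
      (eWeight k A (𝒜 i) (𝒜 j) : ℝ) ≤
        ε * ((𝒜 i).card / A.card : ℝ) * ((𝒜 j).card / A.card : ℝ) * (Tk k A : ℝ)) :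
    (∑ ij ∈ (univ : Finset ι).offDiag, eWeight k A (𝒜 ij.1) (𝒜 ij.2) : ℝ) ≤ ε * Tk k A := by
  set f : ι → ℝ := fun i => (𝒜 i).card / A.card
  have hf : ∀ i, 0 ≤ f i := fun i => by positivity
  have hsum_f : ∑ i, f i ≤ 1 := by
    rw [← sum_div, ← Nat.cast_sum, ← card_biUnion fun i _ j _ hij => hdisj i j hij, hcover]
    exact div_self_le_one _
  calc (∑ ij ∈ (univ : Finset ι).offDiag, eWeight k A (𝒜 ij.1) (𝒜 ij.2) : ℝ)
      ≤ ∑ ij ∈ (univ : Finset ι).offDiag, ε * f ij.1 * f ij.2 * Tk k A :=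
        sum_le_sum fun ij hij => hcross ij.1 ij.2 (mem_offDiag.1 hij).2.2
    _ = ε * Tk k A * ∑ ij ∈ (univ : Finset ι).offDiag, f ij.1 * f ij.2 := by
        rw [mul_sum]
        exact sum_congr rfl fun _ _ => by ring
    _ ≤ ε * Tk k A * (∑ i, f i) ^ 2 := by
        gcongr
        exact sum_offDiag_mul_le_sq_sum f hf
    _ ≤ ε * Tk k A := mul_le_of_le_one_right (by positivity) <|
        pow_le_one₀ (sum_nonneg fun i _ => hf i) hsum_f

end Partition

theorem stmt13_general (k : ℕ) (hk : 2 ≤ k) (ε₁ : ℝ) (hε₁0 : 0 ≤ ε₁)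
    (A : Finset G) (l : ℕ) (𝒜 : Fin l → Finset G)
    (hdisj : ∀ i j, i ≠ j → Disjoint (𝒜 i) (𝒜 j))
    (hcover : Finset.univ.biUnion 𝒜 = A)
    (hcross : ∀ i j, i ≠ j →
      (eWeight k A (𝒜 i) (𝒜 j) : ℝ) ≤
        ε₁ * ((𝒜 i).card / A.card : ℝ) * ((𝒜 j).card / A.card : ℝ) * (Tk k A : ℝ)) :
    (1 - (2 * (k : ℝ) - 1) * ε₁) * (Tk k A : ℝ) ≤ ∑ i, (Tk k (𝒜 i) : ℝ) := by
  obtain ⟨n, rfl⟩ : ∃ n, k = n + 1 := ⟨k - 1, by omega⟩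
  have hcount : (Tk (n + 1) A : ℝ) ≤ ∑ i, (Tk (n + 1) (𝒜 i) : ℝ) + (2 * n + 1) *
      ∑ ij ∈ (univ : Finset (Fin l)).offDiag, (eWeight (n + 1) A (𝒜 ij.1) (𝒜 ij.2) : ℝ) := by
    exact_mod_cast Tk_le_sum_Tk_add_mul_sum_eWeight n A 𝒜 hcover
  have hcross_sum := sum_offDiag_eWeight_le (n + 1) ε₁ hε₁0 A 𝒜 hdisj hcover hcross
  push_cast
  linarith [mul_le_mul_of_nonneg_left hcross_sum (by positivity : (0 : ℝ) ≤ 2 * n + 1)]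

theorem stmt13 (k : ℕ) (hk : 2 ≤ k) (ε₁ : ℝ) (hε₁0 : 0 ≤ ε₁) (hε₁1 : ε₁ ≤ 1)
    (A : Finset G) (l : ℕ) (𝒜 : Fin l → Finset G)
    (hdisj : ∀ i j, i ≠ j → Disjoint (𝒜 i) (𝒜 j))
    (hcover : Finset.univ.biUnion 𝒜 = A)
    (hcross : ∀ i j, i ≠ j →
      (eWeight k A (𝒜 i) (𝒜 j) : ℝ) ≤
        ε₁ * ((𝒜 i).card / A.card : ℝ) * ((𝒜 j).card / A.card : ℝ) * (Tk k A : ℝ)) :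
    (1 - (2 * (k : ℝ) - 1) * ε₁) * (Tk k A : ℝ) ≤ ∑ i, (Tk k (𝒜 i) : ℝ) :=
  stmt13_general k hk ε₁ hε₁0 A l 𝒜 hdisj hcover hcross
end

section
/- Let k = 2^p with p ≥ 1, β ∈ [0,1], and A ⊆ G finite. Suppose there is C ∈ (0,1] and B ⊆ A with |B| ≥ β|A| such that for all disjoint E, F with E ⊔ F = B: ∑_x (E∘F)(x)·((A*_{k-2}A)∘(A*_{k-2}A))(x) ≥ C(|E|/|A|)(|F|/|A|)T_k(A). Then B is connected of degree k with constant Cβ²/8: for every B' ⊆ B, T_k(B') ≥ (Cβ²/8)^{2k}(|B'|/|B|)^{2k} T_k(B). -/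
open Finset Pointwise

variable {G : Type*} [AddCommGroup G] [DecidableEq G]

/-!
View finitely supported functions on `G` as elements of `ℝ[G]`, so that `T_k(S) = ‖1_S^{*k}‖²`
and `e(E,F) = ⟪1_E * 1_A^{*(k-1)}, 1_F * 1_A^{*(k-1)}⟫`. Iterating the Cauchy–Schwarz inequality
`‖f * g‖⁴ ≤ ‖f * f‖² ‖g * g‖²` `p` times gives `‖1_E * 1_A^{*(k-1)}‖^{2k} ≤ T_k(E) T_k(A)^{k-1}`
for `k = 2^p`, so the hypothesis on the partition `B = E ⊔ (B \ E)` yields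
`(C |E| |B \ E| / |A|²)^{2k} T_k(A) ≤ T_k(E)`. It remains to choose `E ⊆ B'` with
`8 |E| |B \ E| ≥ |B'| |B|` and to use `|B| ≥ β |A|`.
-/

namespace AddMonoidAlgebra

variable {Γ ι κ : Type*}

section L2

variable [AddCommGroup Γ]

noncomputable def conjNeg : ℝ[Γ] ≃ₐ[ℝ] ℝ[Γ] :=
  domCongr ℝ ℝ (AddEquiv.neg Γ)

@[simp] lemma coeff_conjNeg (f : ℝ[Γ]) (x : Γ) :
    (conjNeg f).coeff x = f.coeff (-x) := by
  simp [conjNeg, coeff_domCongr]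

@[simp] lemma conjNeg_single (x : Γ) (r : ℝ) : conjNeg (single x r) = single (-x) r := by
  simp [conjNeg, domCongr_single]

@[simp] lemma conjNeg_conjNeg (f : ℝ[Γ]) : conjNeg (conjNeg f) = f := by
  ext x; simp

/-- `pairing f g = ∑ x, f x * g x` (`pairing_eq_sum`), written as a coefficient of a product so
that it is adjoint to convolution. -/
noncomputable def pairing (f g : ℝ[Γ]) : ℝ := (conjNeg f * g).coeff 0

noncomputable def normSq (f : ℝ[Γ]) : ℝ := pairing f f

lemma pairing_eq_sum (f g : ℝ[Γ]) :
    pairing f g = ∑ x ∈ f.coeff.support, f.coeff x * g.coeff x := by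
  conv_lhs => rw [pairing, ← sum_coeff_single f, Finsupp.sum, map_sum, Finset.sum_mul, coeff_sum]
  simp [Finset.sum_apply']

lemma pairing_eq_sum_of_subset {f : ℝ[Γ]} {s : Finset Γ}
    (hs : f.coeff.support ⊆ s) (g : ℝ[Γ]) :
    pairing f g = ∑ x ∈ s, f.coeff x * g.coeff x := by
  rw [pairing_eq_sum]
  exact Finset.sum_subset hs fun x _ hx => by rw [Finsupp.notMem_support_iff.1 hx, zero_mul]

lemma normSq_nonneg (f : ℝ[Γ]) : 0 ≤ normSq f := by
  rw [normSq, pairing_eq_sum]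
  exact Finset.sum_nonneg fun x _ => mul_self_nonneg _

lemma pairing_sq_le (f g : ℝ[Γ]) : pairing f g ^ 2 ≤ normSq f * normSq g := by
  classical
  have hf : f.coeff.support ⊆ f.coeff.support ∪ g.coeff.support := Finset.subset_union_left
  have hg : g.coeff.support ⊆ f.coeff.support ∪ g.coeff.support := Finset.subset_union_right
  simp only [normSq, pairing_eq_sum_of_subset hf, pairing_eq_sum_of_subset hg, ← sq]
  exact Finset.sum_mul_sq_le_sq_mul_sq _ _ _

lemma normSq_mul_sq_le (f g : ℝ[Γ]) :
    normSq (f * g) ^ 2 ≤ normSq (f * f) * normSq (g * g) := by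
  have hfg : normSq (f * g) = pairing (conjNeg f * f) (g * conjNeg g) := by
    simp only [normSq, pairing, map_mul, conjNeg_conjNeg]; ring_nf
  have hf : normSq (conjNeg f * f) = normSq (f * f) := by
    simp only [normSq, pairing, map_mul, conjNeg_conjNeg]; ring_nf
  have hg : normSq (g * conjNeg g) = normSq (g * g) := by
    simp only [normSq, pairing, map_mul, conjNeg_conjNeg]; ring_nf
  rw [hfg, ← hf, ← hg]
  exact pairing_sq_le _ _

lemma normSq_mul_pow_le (p : ℕ) (f a : ℝ[Γ]) :
    normSq (f * a ^ (2 ^ p - 1)) ^ 2 ^ p ≤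
      normSq (f ^ 2 ^ p) * normSq (a ^ 2 ^ p) ^ (2 ^ p - 1) := by
  -- Split off `a ^ 2 ^ p`, apply `normSq_mul_sq_le`, and feed `f ^ 2`, `a ^ 2` to the induction.
  induction p generalizing f a with
  | zero => simp
  | succ p ih =>
    have hk : 1 ≤ 2 ^ p := Nat.one_le_two_pow
    have hsplit : f * a ^ (2 ^ (p + 1) - 1) = (f * a ^ (2 ^ p - 1)) * a ^ 2 ^ p := by
      rw [mul_assoc, ← pow_add]; congr 2; rw [pow_succ]; omega
    have hsq : (f * a ^ (2 ^ p - 1)) * (f * a ^ (2 ^ p - 1)) =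
        f ^ 2 * (a ^ 2) ^ (2 ^ p - 1) := by
      ring
    have hcs := normSq_mul_sq_le (f * a ^ (2 ^ p - 1)) (a ^ 2 ^ p)
    rw [← hsplit, hsq, ← pow_add, ← two_mul, ← pow_succ'] at hcs
    have hsq_pow : ∀ x : ℝ[Γ], (x ^ 2) ^ 2 ^ p = x ^ 2 ^ (p + 1) := fun x => by
      rw [← pow_mul, pow_succ']
    have hih := ih (f ^ 2) (a ^ 2)
    rw [hsq_pow, hsq_pow] at hih
    calc normSq (f * a ^ (2 ^ (p + 1) - 1)) ^ 2 ^ (p + 1)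
        = (normSq (f * a ^ (2 ^ (p + 1) - 1)) ^ 2) ^ 2 ^ p := by rw [← pow_mul, pow_succ']
      _ ≤ (normSq (f ^ 2 * (a ^ 2) ^ (2 ^ p - 1)) * normSq (a ^ 2 ^ (p + 1))) ^ 2 ^ p :=
        pow_le_pow_left₀ (sq_nonneg _) hcs _
      _ ≤ normSq (f ^ 2 ^ (p + 1)) * normSq (a ^ 2 ^ (p + 1)) ^ (2 ^ p - 1)
            * normSq (a ^ 2 ^ (p + 1)) ^ 2 ^ p := by
        rw [mul_pow]
        exact mul_le_mul_of_nonneg_right hih (pow_nonneg (normSq_nonneg _) _)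
      _ = normSq (f ^ 2 ^ (p + 1)) * normSq (a ^ 2 ^ (p + 1)) ^ (2 ^ (p + 1) - 1) := by
        rw [mul_assoc, ← pow_add]; congr 2; rw [pow_succ]; omega

end L2

noncomputable def fiberCount (s : Finset ι) (φ : ι → Γ) : ℝ[Γ] :=
  ∑ t ∈ s, single (φ t) 1

lemma coeff_fiberCount [DecidableEq Γ] (s : Finset ι) (φ : ι → Γ) (x : Γ) :
    (fiberCount s φ).coeff x = #{t ∈ s | φ t = x} := by
  simp [fiberCount, coeff_sum, Finset.sum_apply', coeff_single, Finsupp.single_apply]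

lemma support_fiberCount_subset [DecidableEq Γ] (s : Finset ι) (φ : ι → Γ) :
    (fiberCount s φ).coeff.support ⊆ s.image φ := by
  intro x hx
  rw [Finsupp.mem_support_iff, coeff_fiberCount, Nat.cast_ne_zero, Finset.card_ne_zero] at hx
  obtain ⟨t, ht⟩ := hx
  rw [Finset.mem_filter] at ht
  exact Finset.mem_image.2 ⟨t, ht⟩

lemma fiberCount_mul_fiberCount [Add Γ] (s : Finset ι) (t : Finset κ) (φ : ι → Γ)
    (ψ : κ → Γ) :
    fiberCount s φ * fiberCount t ψ = fiberCount (s ×ˢ t) fun p => φ p.1 + ψ p.2 := by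
  simp [fiberCount, Finset.sum_mul_sum, Finset.sum_product, single_mul_single]

lemma conjNeg_fiberCount [AddCommGroup Γ] (s : Finset ι) (φ : ι → Γ) :
    conjNeg (fiberCount s φ) = fiberCount s fun t => -φ t := by
  simp [fiberCount, map_sum]

lemma fiberCount_mul_conjNeg_fiberCount [AddCommGroup Γ] (s : Finset ι) (t : Finset κ)
    (φ : ι → Γ) (ψ : κ → Γ) :
    fiberCount s φ * conjNeg (fiberCount t ψ) = fiberCount (s ×ˢ t) fun p => φ p.1 - ψ p.2 := by
  simp only [conjNeg_fiberCount, fiberCount_mul_fiberCount, sub_eq_add_neg]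

lemma prod_fiberCount [AddCommMonoid Γ] [Fintype ι] [DecidableEq ι] (s : ι → Finset κ)
    (φ : ι → κ → Γ) :
    ∏ i, fiberCount (s i) (φ i) = fiberCount (Fintype.piFinset s) fun t => ∑ i, φ i (t i) := by
  simp [fiberCount, Finset.prod_univ_sum]

lemma pairing_fiberCount [AddCommGroup Γ] [DecidableEq Γ] (s : Finset ι) (t : Finset κ)
    (φ : ι → Γ) (ψ : κ → Γ) :
    pairing (fiberCount s φ) (fiberCount t ψ) = #{p ∈ s ×ˢ t | φ p.1 = ψ p.2} := by
  simp [pairing, conjNeg_fiberCount, fiberCount_mul_fiberCount, coeff_fiberCount,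
    neg_add_eq_zero]

noncomputable def indicator (S : Finset Γ) : ℝ[Γ] := fiberCount S id

lemma indicator_pow [AddCommMonoid Γ] (S : Finset Γ) (n : ℕ) :
    indicator S ^ n = fiberCount (Fintype.piFinset fun _ : Fin n => S) fun t => ∑ i, t i := by
  simpa [indicator] using prod_fiberCount (fun _ : Fin n => S) fun _ => (id : Γ → Γ)

lemma indicator_mul_conjNeg_indicator [AddCommGroup Γ] (E F : Finset Γ) :
    indicator E * conjNeg (indicator F) = fiberCount (E ×ˢ F) fun p => p.1 - p.2 :=
  fiberCount_mul_conjNeg_fiberCount E F id id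

end AddMonoidAlgebra

open AddMonoidAlgebra

lemma Tk_eq_normSq (k : ℕ) (S : Finset G) : (Tk k S : ℝ) = normSq (indicator S ^ k) := by
  rw [normSq, indicator_pow, pairing_fiberCount, Tk]

lemma Tk_mono (k : ℕ) {S T : Finset G} (h : S ⊆ T) : Tk k S ≤ Tk k T := by
  unfold Tk
  gcongr <;> exact Fintype.piFinset_subset _ _ fun _ => h

lemma circ2_eq_coeff (E F : Finset G) (x : G) :
    (circ2 E F x : ℝ) = (indicator E * conjNeg (indicator F)).coeff x := by
  rw [indicator_mul_conjNeg_indicator, coeff_fiberCount, circ2]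

lemma circConv_eq_coeff (k : ℕ) (A : Finset G) (x : G) :
    (circConv k A x : ℝ) = (indicator A ^ (k - 1) * conjNeg (indicator A ^ (k - 1))).coeff x := by
  rw [indicator_pow, fiberCount_mul_conjNeg_fiberCount, coeff_fiberCount, circConv]

lemma eWeight_eq_pairing (k : ℕ) (A E F : Finset G) :
    (eWeight k A E F : ℝ) =
      pairing (indicator E * indicator A ^ (k - 1)) (indicator F * indicator A ^ (k - 1)) := by
  have hsupp : (indicator E * conjNeg (indicator F)).coeff.support ⊆ E - F := by
    rw [indicator_mul_conjNeg_indicator, ← Finset.image_sub_product]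
    exact support_fiberCount_subset _ _
  have hadj : pairing (indicator E * conjNeg (indicator F))
        (indicator A ^ (k - 1) * conjNeg (indicator A ^ (k - 1))) =
      pairing (indicator E * indicator A ^ (k - 1)) (indicator F * indicator A ^ (k - 1)) := by
    simp only [pairing, map_mul, conjNeg_conjNeg]
    ring_nf
  rw [← hadj, pairing_eq_sum_of_subset hsupp, eWeight]
  push_cast
  simp only [circ2_eq_coeff, circConv_eq_coeff]

lemma pow_succ_mul_le_of_mul_pow_le {c T x : ℝ} {n : ℕ} (hT : 0 ≤ T) (hx : 0 ≤ x)
    (h : (c * T) ^ (n + 1) ≤ x * T ^ n) : c ^ (n + 1) * T ≤ x := by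
  rcases hT.eq_or_lt with rfl | hT
  · simpa using hx
  refine le_of_mul_le_mul_right ?_ (pow_pos hT n)
  calc c ^ (n + 1) * T * T ^ n = (c * T) ^ (n + 1) := by ring
    _ ≤ x * T ^ n := h

lemma normSq_indicator_mul_pow_le (p : ℕ) (S A : Finset G) :
    normSq (indicator S * indicator A ^ (2 ^ p - 1)) ^ 2 ^ p ≤
      Tk (2 ^ p) S * (Tk (2 ^ p) A : ℝ) ^ (2 ^ p - 1) := by
  rw [Tk_eq_normSq, Tk_eq_normSq]
  exact normSq_mul_pow_le p _ _

lemma pow_mul_Tk_le_Tk_of_le_eWeight (p : ℕ) {A E F : Finset G} (hF : F ⊆ A) {c : ℝ}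
    (hc : 0 ≤ c) (h : c * Tk (2 ^ p) A ≤ eWeight (2 ^ p) A E F) :
    c ^ (2 * 2 ^ p) * Tk (2 ^ p) A ≤ Tk (2 ^ p) E := by
  set k := 2 ^ p
  have hT : (0 : ℝ) ≤ Tk k A := Nat.cast_nonneg _
  have hNF :
      normSq (indicator F * indicator A ^ (k - 1)) ^ k ≤ Tk k A * (Tk k A : ℝ) ^ (k - 1) :=
    (normSq_indicator_mul_pow_le p F A).trans (by gcongr; exact_mod_cast Tk_mono k hF)
  have he : (eWeight k A E F : ℝ) ^ 2 ≤
      normSq (indicator E * indicator A ^ (k - 1)) *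
        normSq (indicator F * indicator A ^ (k - 1)) := by
    rw [eWeight_eq_pairing]; exact pairing_sq_le _ _
  have hexp : 2 * k = (2 * k - 1) + 1 := by have : 1 ≤ k := Nat.one_le_two_pow; omega
  rw [hexp]
  refine pow_succ_mul_le_of_mul_pow_le hT (Nat.cast_nonneg _) ?_
  calc (c * Tk k A) ^ (2 * k - 1 + 1) = (c * Tk k A) ^ (2 * k) := by rw [← hexp]
    _ ≤ (eWeight k A E F : ℝ) ^ (2 * k) := pow_le_pow_left₀ (by positivity) h _
    _ = ((eWeight k A E F : ℝ) ^ 2) ^ k := pow_mul _ _ _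
    _ ≤ (normSq (indicator E * indicator A ^ (k - 1)) *
          normSq (indicator F * indicator A ^ (k - 1))) ^ k := pow_le_pow_left₀ (sq_nonneg _) he _
    _ ≤ (Tk k E * (Tk k A : ℝ) ^ (k - 1)) * (Tk k A * (Tk k A : ℝ) ^ (k - 1)) := by
        rw [mul_pow]
        exact mul_le_mul (normSq_indicator_mul_pow_le p E A) hNF
          (pow_nonneg (normSq_nonneg _) _) (by positivity)
    _ = Tk k E * (Tk k A : ℝ) ^ (2 * k - 1) := by
        rw [show 2 * k - 1 = (k - 1) + 1 + (k - 1) by omega]; ring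

lemma exists_subset_card_mul_card_sdiff {α : Type*} [DecidableEq α] {B' B : Finset α}
    (h : B' ⊂ B) : ∃ E ⊆ B', #B' * #B ≤ 8 * (#E * #(B \ E)) := by
  have hlt : #B' < #B := Finset.card_lt_card h
  -- `E` is `B'` itself, or `⌊|B| / 2⌋` elements of `B'` when `B'` is larger than that.
  obtain ⟨E, hEB', hE⟩ := Finset.exists_subset_card_eq (min_le_left #B' (#B / 2))
  refine ⟨E, hEB', ?_⟩
  rw [Finset.card_sdiff_of_subset (hEB'.trans h.subset), hE]
  generalize #B' = m at hlt ⊢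
  generalize #B = n at hlt ⊢
  obtain ⟨q, r, rfl, hq, hqr, hrq⟩ : ∃ q r, n = q + r ∧ n / 2 = q ∧ q ≤ r ∧ r ≤ q + 1 :=
    ⟨n / 2, n - n / 2, by omega, rfl, by omega, by omega⟩
  rw [hq]
  rcases le_total m q with hm | hm
  · rw [min_eq_left hm, show q + r - m = (q - m) + r by omega]
    nlinarith
  · rw [min_eq_right hm, Nat.add_sub_cancel_left]
    rcases Nat.eq_zero_or_pos q with rfl | hq
    · obtain rfl : m = 0 := by omega
      simp
    · nlinarith

lemma mul_sq_div_mul_div_le {C β a b b' e f : ℝ} (hC : 0 ≤ C) (hβ : 0 ≤ β) (ha : 0 < a)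
    (hb : 0 < b) (hb' : 0 ≤ b') (hβb : β * a ≤ b) (h : b' * b ≤ 8 * (e * f)) :
    C * β ^ 2 / 8 * (b' / b) ≤ C * (e / a) * (f / a) := by
  have hβ' : β ≤ b / a := (le_div_iff₀ ha).2 hβb
  calc C * β ^ 2 / 8 * (b' / b) ≤ C * (b / a) ^ 2 / 8 * (b' / b) := by gcongr
    _ = C * (b' * b) / (8 * a ^ 2) := by field_simp
    _ ≤ C * (8 * (e * f)) / (8 * a ^ 2) := by gcongr
    _ = C * (e / a) * (f / a) := by field_simp

theorem stmt15_general (p : ℕ) (β : ℝ) (hβ0 : 0 ≤ β) (hβ1 : β ≤ 1)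
    (C : ℝ) (hC0 : 0 < C) (hC1 : C ≤ 1) (A B : Finset G) (hBA : B ⊆ A)
    (hBcard : β * (A.card : ℝ) ≤ (B.card : ℝ))
    (hconn : ∀ E F : Finset G, Disjoint E F → E ∪ F = B →
      C * ((E.card : ℝ) / A.card) * ((F.card : ℝ) / A.card) * (Tk (2 ^ p) A : ℝ) ≤
        (eWeight (2 ^ p) A E F : ℝ)) :
    ∀ B' ⊆ B,
      (C * β ^ 2 / 8) ^ (2 * 2 ^ p) * ((B'.card : ℝ) / B.card) ^ (2 * 2 ^ p) *
          (Tk (2 ^ p) B : ℝ) ≤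
        (Tk (2 ^ p) B' : ℝ) := by
  intro B' hB'
  rw [← mul_pow]
  rcases hB'.eq_or_ssubset with rfl | hlt
  · have hle : C * β ^ 2 / 8 * (#B' / #B' : ℝ) ≤ 1 :=
      calc C * β ^ 2 / 8 * (#B' / #B' : ℝ) ≤ 1 * 1 ^ 2 / 8 * 1 := by
            gcongr; exact div_self_le_one _
        _ ≤ 1 := by norm_num
    exact mul_le_of_le_one_left (Nat.cast_nonneg _) (pow_le_one₀ (by positivity) hle)
  obtain ⟨E, hEB', hcard⟩ := exists_subset_card_mul_card_sdiff hlt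
  have hB : (0 : ℝ) < #B := by exact_mod_cast (Finset.card_lt_card hlt).trans_le' (Nat.zero_le _)
  have hA : (0 : ℝ) < #A := hB.trans_le (by exact_mod_cast Finset.card_le_card hBA)
  have hc : C * β ^ 2 / 8 * (#B' / #B : ℝ) ≤ C * (#E / #A) * (#(B \ E) / #A) :=
    mul_sq_div_mul_div_le hC0.le hβ0 hA hB (Nat.cast_nonneg _) hBcard (by exact_mod_cast hcard)
  have hkey := pow_mul_Tk_le_Tk_of_le_eWeight p (Finset.sdiff_subset.trans hBA) (by positivity)
    (hconn E (B \ E) Finset.disjoint_sdiff (Finset.union_sdiff_of_subset (hEB'.trans hB')))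
  calc (C * β ^ 2 / 8 * (#B' / #B)) ^ (2 * 2 ^ p) * (Tk (2 ^ p) B : ℝ)
      ≤ (C * (#E / #A) * (#(B \ E) / #A)) ^ (2 * 2 ^ p) * Tk (2 ^ p) A := by
        gcongr
        exact Tk_mono _ hBA
    _ ≤ (Tk (2 ^ p) E : ℝ) := hkey
    _ ≤ (Tk (2 ^ p) B' : ℝ) := by exact_mod_cast Tk_mono _ hEB'

theorem stmt15 (p : ℕ) (hp : 1 ≤ p) (β : ℝ) (hβ0 : 0 ≤ β) (hβ1 : β ≤ 1)
    (C : ℝ) (hC0 : 0 < C) (hC1 : C ≤ 1) (A B : Finset G) (hBA : B ⊆ A)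
    (hBcard : β * (A.card : ℝ) ≤ (B.card : ℝ))
    (hconn : ∀ E F : Finset G, Disjoint E F → E ∪ F = B →
      C * ((E.card : ℝ) / A.card) * ((F.card : ℝ) / A.card) * (Tk (2 ^ p) A : ℝ) ≤
        (eWeight (2 ^ p) A E F : ℝ)) :
    ∀ B' ⊆ B,
      (C * β ^ 2 / 8) ^ (2 * 2 ^ p) * ((B'.card : ℝ) / B.card) ^ (2 * 2 ^ p) *
          (Tk (2 ^ p) B : ℝ) ≤
        (Tk (2 ^ p) B' : ℝ) :=
  stmt15_general p β hβ0 hβ1 C hC0 hC1 A B hBA hBcard hconn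
end
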